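/- In the non-forgetful single-history channel algorithm, if in the n-th iteration the last output event (t'_n, x'_n) is deleted (i.e., the iteration reaches the case t_n + δ(T_n) ≤ r_{n−1}), then r_{n−1} = t'_n. Consequently, every output event is either deleted in the immediately following iteration or never deleted. -/
import Mathlib


open scoped Classical

/-- The value of the last event of an output list (stored in reverse order, the most
recent event first); the implicit initial event is `(−∞, x)`. -/
def lastVal (x : Bool) : List (ℝ × Bool) → Bool
  | [] => x
  | e :: _ => e.2

/-- One iteration of the non-forgetful single-history channel algorithm with delay
function `δ`, limit delay `dinfty = δ∞`, and initial value `x`, processing input event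
`e`.  The state is the output list (in reverse order; the initial event `(−∞, x)` is
implicit) together with the most recent potential output time `r` (`none` = `−∞`). -/
noncomputable def nstep (δ : ℝ → ℝ) (dinfty : ℝ) (x : Bool) :
    List (ℝ × Bool) × Option ℝ → ℝ × Bool → List (ℝ × Bool) × Option ℝ
  | (S, r), e =>
    if e.2 = lastVal x S then (S, r)
    else
      match r with
      | none => ((e.1 + dinfty, e.2) :: S, some (e.1 + dinfty))
      | some rp =>
          if rp < e.1 + δ (e.1 - rp) then
            ((e.1 + δ (e.1 - rp), e.2) :: S, some (e.1 + δ (e.1 - rp)))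
          else (S.tail, some (e.1 + δ (e.1 - rp)))

/-- The state `(S_n, r_{n-1})` after `n` iterations of the non-forgetful algorithm on the
input event list `ev`. -/
noncomputable def nstates (δ : ℝ → ℝ) (dinfty : ℝ) (x : Bool) (ev : ℕ → ℝ × Bool) :
    ℕ → List (ℝ × Bool) × Option ℝ
  | 0 => ([], none)
  | n + 1 => nstep δ dinfty x (nstates δ dinfty x ev n) (ev n)

lemma nstates_succ' (δ : ℝ → ℝ) (d : ℝ) (x : Bool) (ev : ℕ → ℝ × Bool) (m : ℕ) :
    nstates δ d x ev (m + 1) = nstep δ d x (nstates δ d x ev m) (ev m) := rfl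

lemma nstep_noop' (δ : ℝ → ℝ) (d : ℝ) (x : Bool) (S : List (ℝ × Bool)) (r : Option ℝ)
    (e : ℝ × Bool) (h : e.2 = lastVal x S) : nstep δ d x (S, r) e = (S, r) := by
  simp [nstep, h]

lemma nstep_none' (δ : ℝ → ℝ) (d : ℝ) (x : Bool) (S : List (ℝ × Bool))
    (e : ℝ × Bool) (h : e.2 ≠ lastVal x S) :
    nstep δ d x (S, none) e = ((e.1 + d, e.2) :: S, some (e.1 + d)) := by
  simp [nstep, h]

lemma nstep_push' (δ : ℝ → ℝ) (d : ℝ) (x : Bool) (S : List (ℝ × Bool)) (rp : ℝ)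
    (e : ℝ × Bool) (h : e.2 ≠ lastVal x S) (h2 : rp < e.1 + δ (e.1 - rp)) :
    nstep δ d x (S, some rp) e =
      ((e.1 + δ (e.1 - rp), e.2) :: S, some (e.1 + δ (e.1 - rp))) := by
  simp [nstep, h, h2]

lemma nstep_del' (δ : ℝ → ℝ) (d : ℝ) (x : Bool) (S : List (ℝ × Bool)) (rp : ℝ)
    (e : ℝ × Bool) (h : e.2 ≠ lastVal x S) (h2 : ¬ rp < e.1 + δ (e.1 - rp)) :
    nstep δ d x (S, some rp) e = (S.tail, some (e.1 + δ (e.1 - rp))) := by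
  simp [nstep, h, h2]

/-- Key invariant: the state is either initial, or the head of the output list carries
the current potential output time `ρ` (case B), or (immediately after a deletion,
case C) the next iteration is guaranteed not to delete. -/
lemma nstates_key (δ : ℝ → ℝ) (d : ℝ) (x : Bool) (ev : ℕ → ℝ × Bool)
    (hmono : Monotone δ) (hinc : StrictMono fun n => (ev n).1) :
    ∀ m : ℕ,
      ((nstates δ d x ev m).2 = none ∧ (nstates δ d x ev m).1 = []) ∨
      (∃ ρ b rest, (nstates δ d x ev m).2 = some ρ ∧
        (nstates δ d x ev m).1 = (ρ, b) :: rest) ∨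
      (∃ ρ, (nstates δ d x ev m).2 = some ρ ∧ ρ < (ev m).1 + δ ((ev m).1 - ρ)) := by
  intro m
  induction m with
  | zero => left; exact ⟨rfl, rfl⟩
  | succ m ih =>
    have htm : (ev m).1 < (ev (m + 1)).1 := hinc (Nat.lt_succ_self m)
    rcases hS : nstates δ d x ev m with ⟨S, r⟩
    rw [hS] at ih
    rw [nstates_succ', hS]
    by_cases hc : (ev m).2 = lastVal x S
    · rw [nstep_noop' δ d x S r _ hc]
      rcases ih with ⟨h1, h2⟩ | ⟨ρ, b, rest, h1, h2⟩ | ⟨ρ, h1, h2⟩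
      · left; exact ⟨h1, h2⟩
      · right; left; exact ⟨ρ, b, rest, h1, h2⟩
      · right; right
        refine ⟨ρ, h1, ?_⟩
        have : δ ((ev m).1 - ρ) ≤ δ ((ev (m + 1)).1 - ρ) := hmono (by linarith)
        linarith
    · rcases ih with ⟨h1, h2⟩ | ⟨ρ, b, rest, h1, h2⟩ | ⟨ρ, h1, h2⟩
      · have hr : r = none := h1
        subst hr
        rw [nstep_none' δ d x S _ hc]
        right; left
        exact ⟨(ev m).1 + d, (ev m).2, S, rfl, rfl⟩
      · have hr : r = some ρ := h1
        subst hr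
        by_cases hlt : ρ < (ev m).1 + δ ((ev m).1 - ρ)
        · rw [nstep_push' δ d x S ρ _ hc hlt]
          right; left
          exact ⟨(ev m).1 + δ ((ev m).1 - ρ), (ev m).2, S, rfl, rfl⟩
        · rw [nstep_del' δ d x S ρ _ hc hlt]
          right; right
          refine ⟨(ev m).1 + δ ((ev m).1 - ρ), rfl, ?_⟩
          push_neg at hlt
          have hδ : δ ((ev m).1 - ρ) ≤
              δ ((ev (m + 1)).1 - ((ev m).1 + δ ((ev m).1 - ρ))) :=
            hmono (by linarith)
          linarith
      · have hr : r = some ρ := h1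
        subst hr
        rw [nstep_push' δ d x S ρ _ hc h2]
        right; left
        exact ⟨(ev m).1 + δ ((ev m).1 - ρ), (ev m).2, S, rfl, rfl⟩

/-- in the non-forgetful single-history channel algorithm, if iteration `n`
deletes the last output event `(t'_n, x'_n)` (i.e. the values differ and
`t_n + δ(T_n) ≤ r_{n−1}`), then `r_{n−1} = t'_n`.  Consequently, an event appended at
iteration `n` that is not deleted at iteration `n+1` is never deleted (the whole output
list present after its addition persists as a suffix of all later output lists). -/
theorem nonforgetful_delete_last (δ : ℝ → ℝ) (dinfty : ℝ) (x : Bool)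
    (hmono : Monotone δ)
    (hlim : Filter.Tendsto δ Filter.atTop (nhds dinfty))
    (hpos : 0 < dinfty)
    (ev : ℕ → ℝ × Bool)
    (hnn : 0 ≤ (ev 0).1)
    (hinc : StrictMono fun n => (ev n).1)
    (htop : Filter.Tendsto (fun n => (ev n).1) Filter.atTop Filter.atTop)
    (halt : ∀ n, (ev (n + 1)).2 ≠ (ev n).2) :
    (∀ (n : ℕ) (rp : ℝ),
        (nstates δ dinfty x ev n).2 = some rp →
        (ev n).2 ≠ lastVal x (nstates δ dinfty x ev n).1 →
        (ev n).1 + δ ((ev n).1 - rp) ≤ rp →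
        ∃ (b : Bool) (rest : List (ℝ × Bool)),
          (nstates δ dinfty x ev n).1 = (rp, b) :: rest) ∧
    (∀ (n : ℕ) (e : ℝ × Bool),
        (nstates δ dinfty x ev (n + 1)).1 = e :: (nstates δ dinfty x ev n).1 →
        (nstates δ dinfty x ev (n + 2)).1 ≠ ((nstates δ dinfty x ev (n + 1)).1).tail →
        ∀ m : ℕ, n + 1 ≤ m →
          (e :: (nstates δ dinfty x ev n).1) <:+ (nstates δ dinfty x ev m).1) := by
  have hfst : ∀ (n : ℕ) (rp : ℝ),
      (nstates δ dinfty x ev n).2 = some rp →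
      (ev n).2 ≠ lastVal x (nstates δ dinfty x ev n).1 →
      (ev n).1 + δ ((ev n).1 - rp) ≤ rp →
      ∃ (b : Bool) (rest : List (ℝ × Bool)),
        (nstates δ dinfty x ev n).1 = (rp, b) :: rest := by
    intro n rp hr hne hle
    rcases nstates_key δ dinfty x ev hmono hinc n with
      ⟨h1, _⟩ | ⟨ρ, b, rest, h1, h2⟩ | ⟨ρ, h1, h2⟩
    · rw [h1] at hr; exact absurd hr (by simp)
    · rw [h1] at hr
      obtain rfl : ρ = rp := by injection hr
      exact ⟨b, rest, h2⟩
    · rw [h1] at hr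
      obtain rfl : ρ = rp := by injection hr
      linarith
  refine ⟨hfst, ?_⟩
  intro n e h1 h2
  -- step n was a push, so e carries the value (ev n).2 and r_n = e.1
  rcases hS : nstates δ dinfty x ev n with ⟨S, r⟩
  rw [hS] at h1
  simp only at h1
  have hstep : nstates δ dinfty x ev (n + 1) = nstep δ dinfty x (S, r) (ev n) := by
    rw [nstates_succ', hS]
  obtain ⟨he2, hr2⟩ : e.2 = (ev n).2 ∧
      nstates δ dinfty x ev (n + 1) = (e :: S, some e.1) := by
    by_cases hc : (ev n).2 = lastVal x S
    · rw [nstep_noop' δ dinfty x S r _ hc] at hstep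
      rw [hstep] at h1
      exact absurd h1.symm (List.cons_ne_self e S)
    · cases r with
      | none =>
          rw [nstep_none' δ dinfty x S _ hc] at hstep
          rw [hstep] at h1
          obtain ⟨h1a, -⟩ := List.cons.injEq _ _ _ _ ▸ h1
          refine ⟨by rw [← h1a], ?_⟩
          rw [hstep, ← h1a]
      | some ρ =>
          by_cases hlt : ρ < (ev n).1 + δ ((ev n).1 - ρ)
          · rw [nstep_push' δ dinfty x S ρ _ hc hlt] at hstep
            rw [hstep] at h1
            obtain ⟨h1a, -⟩ := List.cons.injEq _ _ _ _ ▸ h1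
            refine ⟨by rw [← h1a], ?_⟩
            rw [hstep, ← h1a]
          · rw [nstep_del' δ dinfty x S ρ _ hc hlt] at hstep
            rw [hstep] at h1
            have hl := congrArg List.length h1
            rw [List.length_tail, List.length_cons] at hl
            omega
  -- the crucial inequality F
  have hF : e.1 < (ev (n + 1)).1 + δ ((ev (n + 1)).1 - e.1) := by
    by_contra hF
    have hc : (ev (n + 1)).2 ≠ lastVal x (e :: S) := by
      simpa [lastVal, he2] using halt n
    have : nstates δ dinfty x ev (n + 2) = ((e :: S).tail, some ((ev (n+1)).1 +
        δ ((ev (n+1)).1 - e.1))) := by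
      rw [nstates_succ', hr2, nstep_del' δ dinfty x (e :: S) e.1 _ hc hF]
    apply h2
    rw [this, hr2]
  -- induction over m ≥ n+1
  intro m hm
  induction m, hm using Nat.le_induction with
  | base =>
      have : (nstates δ dinfty x ev (n + 1)).1 = e :: S := by rw [hr2]
      rw [this]
  | succ m hm ih =>
      have htm : (ev (n + 1)).1 ≤ (ev m).1 := hinc.monotone hm
      rcases hSm : nstates δ dinfty x ev m with ⟨Sm, rm⟩
      rw [hSm] at ih
      simp only at ih
      have hstepm : nstates δ dinfty x ev (m + 1) = nstep δ dinfty x (Sm, rm) (ev m) := by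
        rw [nstates_succ', hSm]
      by_cases hc : (ev m).2 = lastVal x Sm
      · rw [hstepm, nstep_noop' δ dinfty x Sm rm _ hc]
        exact ih
      · cases rm with
        | none =>
            rw [hstepm, nstep_none' δ dinfty x Sm _ hc]
            exact ih.trans (List.suffix_cons _ _)
        | some ρ =>
            by_cases hlt : ρ < (ev m).1 + δ ((ev m).1 - ρ)
            · rw [hstepm, nstep_push' δ dinfty x Sm ρ _ hc hlt]
              exact ih.trans (List.suffix_cons _ _)
            · rw [hstepm, nstep_del' δ dinfty x Sm ρ _ hc hlt]
              -- by the key invariant, we are in case B: Sm = (ρ, b) :: rest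
              rcases nstates_key δ dinfty x ev hmono hinc m with
                ⟨hk1, -⟩ | ⟨ρ', b, rest, hk1, hk2⟩ | ⟨ρ', hk1, hk2⟩
              · rw [hSm] at hk1; exact absurd hk1 (by simp)
              · rw [hSm] at hk1 hk2
                obtain rfl : ρ = ρ' := Option.some.inj hk1
                simp only at hk2
                subst hk2
                rcases List.suffix_cons_iff.mp ih with heq | hsuf
                · -- the list is exactly e :: (nstates n).1 : deletion impossible
                  exfalso
                  have hea : e = (ρ, b) := (List.cons_eq_cons.mp heq).1
                  have hρ : ρ = e.1 := by rw [hea]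
                  have hδ : δ ((ev (n + 1)).1 - e.1) ≤ δ ((ev m).1 - e.1) :=
                    hmono (by linarith)
                  apply hlt
                  rw [hρ]
                  linarith
                · simpa using hsuf
              · rw [hSm] at hk1
                obtain rfl : ρ = ρ' := Option.some.inj hk1
                exact absurd hk2 hlt
  -- close the `simp only at h1` trivial goal if any
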